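/- Uniqueness of the global minimizer on the strict-feasibility set: with F, P as above, let F¹ = {w ∈ F : s_b Re(w v_b) > 0 for some b} be the subset where P is not maximal (i.e., excluding points where all arguments vanish). Since Q is strictly convex on (0,∞), if w₁ ≠ w₂ are both global minimizers of P over F lying in F¹, the normalized midpoint w₀ satisfies P(w₀) < P(w₁), a contradiction; hence the global minimizer on F¹ is unique. -/

import Mathlib

noncomputable def gaussQ (x : ℝ) : ℝ :=
  (Real.sqrt (2 * Real.pi))⁻¹ * ∫ u in Set.Ioi x, Real.exp (-u ^ 2 / 2)

/-
If `w₁ ≠ w₂` are unit vectors then `r = ‖w₁ + w₂‖ < 2` by strict convexity of the norm, and the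
normalized midpoint `w₀ = (w₁ + w₂) / r` is again feasible: its margins `s_b Re(w₀ v_b)` are
`(x_b + y_b) / r ≥ (x_b + y_b) / 2`, where `x_b, y_b` are the margins of `w₁, w₂`. As `Q` is
decreasing and convex on `[0, ∞)`, `Q(t (x_b + y_b) / r) ≤ (Q(t x_b) + Q(t y_b)) / 2`, strictly at
an index with `x_b > 0` because `Q` is strictly decreasing and `r < 2`. Hence
`P(w₀) < (P(w₁) + P(w₂)) / 2 = min_F P`, a contradiction.
-/

open MeasureTheory Set Real

lemma integrable_exp_neg_sq_div_two : Integrable fun u : ℝ => exp (-u ^ 2 / 2) := by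
  simpa [neg_div, div_eq_inv_mul, mul_comm] using
    integrable_exp_neg_mul_sq (b := 1 / 2) (by norm_num)

lemma gaussQ_eq_sub_intervalIntegral (x : ℝ) :
    gaussQ x = (√(2 * π))⁻¹ *
      ((∫ u in Ioi 0, exp (-u ^ 2 / 2)) - ∫ u in (0 : ℝ)..x, exp (-u ^ 2 / 2)) := by
  have hf := integrable_exp_neg_sq_div_two
  rw [← intervalIntegral.integral_Ioi_sub_Ioi' hf.integrableOn hf.integrableOn, sub_sub_cancel,
    gaussQ]

lemma hasDerivAt_gaussQ (x : ℝ) : HasDerivAt gaussQ (-((√(2 * π))⁻¹ * exp (-x ^ 2 / 2))) x := by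
  have hcont : Continuous fun u : ℝ => exp (-u ^ 2 / 2) := by fun_prop
  have hint := intervalIntegral.integral_hasDerivAt_right (a := 0) (b := x)
    (hcont.intervalIntegrable _ _) hcont.aestronglyMeasurable.stronglyMeasurableAtFilter
    hcont.continuousAt
  rw [funext gaussQ_eq_sub_intervalIntegral, ← mul_neg, ← zero_sub]
  exact ((hasDerivAt_const x _).sub hint).const_mul _

lemma gaussQ_strictAnti : StrictAnti gaussQ :=
  strictAnti_of_hasDerivAt_neg hasDerivAt_gaussQ fun x => by
    rw [neg_lt_zero]
    positivity

lemma convexOn_gaussQ : ConvexOn ℝ (Ici 0) gaussQ := by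
  have hderiv : deriv gaussQ = fun x => -((√(2 * π))⁻¹ * exp (-x ^ 2 / 2)) :=
    funext fun x => (hasDerivAt_gaussQ x).deriv
  refine MonotoneOn.convexOn_of_deriv (convex_Ici 0)
    (fun x _ => (hasDerivAt_gaussQ x).continuousAt.continuousWithinAt)
    (fun x _ => (hasDerivAt_gaussQ x).differentiableAt.differentiableWithinAt) ?_
  rw [interior_Ici, hderiv]
  intro x hx y hy hxy
  simp only [neg_le_neg_iff]
  gcongr
  exact le_of_lt hx

lemma gaussQ_midpoint_le {x y : ℝ} (hx : 0 ≤ x) (hy : 0 ≤ y) :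
    gaussQ ((x + y) / 2) ≤ (gaussQ x + gaussQ y) / 2 := by
  calc gaussQ ((x + y) / 2) = gaussQ ((1 / 2 : ℝ) • x + (1 / 2 : ℝ) • y) := by
        simp only [smul_eq_mul]; ring_nf
    _ ≤ (1 / 2 : ℝ) • gaussQ x + (1 / 2 : ℝ) • gaussQ y :=
        convexOn_gaussQ.2 (mem_Ici.2 hx) (mem_Ici.2 hy) (by norm_num) (by norm_num) (by norm_num)
    _ = (gaussQ x + gaussQ y) / 2 := by simp only [smul_eq_mul]; ring

lemma gaussQ_div_le_average {x y r : ℝ} (hx : 0 ≤ x) (hy : 0 ≤ y) (hr : 0 < r) (hr2 : r ≤ 2) :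
    gaussQ ((x + y) / r) ≤ (gaussQ x + gaussQ y) / 2 :=
  (gaussQ_strictAnti.antitone (div_le_div_of_nonneg_left (add_nonneg hx hy) hr hr2)).trans
    (gaussQ_midpoint_le hx hy)

lemma gaussQ_div_lt_average {x y r : ℝ} (hx : 0 ≤ x) (hy : 0 ≤ y) (hxy : 0 < x + y)
    (hr : 0 < r) (hr2 : r < 2) :
    gaussQ ((x + y) / r) < (gaussQ x + gaussQ y) / 2 :=
  (gaussQ_strictAnti (div_lt_div_of_pos_left hxy hr hr2)).trans_le (gaussQ_midpoint_le hx hy)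

lemma sum_gaussQ_div_lt_average {ι : Type*} [Fintype ι] {x y : ι → ℝ} {r : ℝ}
    (hx : ∀ i, 0 ≤ x i) (hy : ∀ i, 0 ≤ y i) (hr : 0 < r) (hr2 : r < 2) {i₀ : ι} (hi₀ : 0 < x i₀) :
    ∑ i, gaussQ ((x i + y i) / r) < (∑ i, gaussQ (x i) + ∑ i, gaussQ (y i)) / 2 := by
  rw [← Finset.sum_add_distrib, Finset.sum_div]
  refine Finset.sum_lt_sum (fun i _ => gaussQ_div_le_average (hx i) (hy i) hr hr2.le)
    ⟨i₀, Finset.mem_univ _, gaussQ_div_lt_average (hx i₀) (hy i₀) ?_ hr hr2⟩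
  exact add_pos_of_pos_of_nonneg hi₀ (hy i₀)

lemma norm_add_lt_two_of_ne {E : Type*} [NormedAddCommGroup E] [NormedSpace ℝ E]
    [StrictConvexSpace ℝ E] {x y : E} (hx : ‖x‖ = 1) (hy : ‖y‖ = 1) (hne : x ≠ y) :
    ‖x + y‖ < 2 := by
  have := (norm_midpoint_lt_iff (hx.trans hy.symm)).2 hne
  rw [norm_smul, hx] at this
  norm_num at this
  linarith

lemma re_smul_add_mul (r : ℝ) (w₁ w₂ v : ℂ) :
    ((r • (w₁ + w₂)) * v).re = r * ((w₁ * v).re + (w₂ * v).re) := by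
  rw [smul_mul_assoc, Complex.smul_re, add_mul, Complex.add_re, smul_eq_mul]

theorem global_minimizer_unique_on_strict_set_general
    (N : ℕ) (v : Fin N → ℂ) (s : Fin N → ℝ)
    (t : ℝ) (ht : 0 < t) (F F₁ : Set ℂ)
    (hF : F = {w : ℂ | ‖w‖ = 1 ∧ ∀ b : Fin N, s b * (w * v b).re ≥ 0})
    (hF₁ : F₁ = {w ∈ F | ∃ b : Fin N, s b * (w * v b).re > 0})
    (P : ℂ → ℝ)
    (hP : ∀ w : ℂ, P w = (1 / (N : ℝ)) * ∑ b : Fin N, gaussQ (t * (s b * (w * v b).re)))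
    (w₁ w₂ : ℂ) (hw₁ : w₁ ∈ F₁) (hw₂ : w₂ ∈ F₁)
    (hglob₁ : ∀ w ∈ F, P w₁ ≤ P w) (hglob₂ : ∀ w ∈ F, P w₂ ≤ P w) :
    w₁ = w₂ := by
  subst hF hF₁
  obtain ⟨hw₁F, b₀, hb₀⟩ := hw₁
  obtain ⟨hw₂F, -⟩ := hw₂
  by_contra hne
  have hsum : w₁ + w₂ ≠ 0 := fun h => by
    have := hw₂F.2 b₀
    rw [eq_neg_of_add_eq_zero_right h, neg_mul, Complex.neg_re] at this
    linarith
  set r := ‖w₁ + w₂‖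
  have hr : 0 < r := norm_pos_iff.2 hsum
  have hr2 : r < 2 := norm_add_lt_two_of_ne hw₁F.1 hw₂F.1 hne
  have hmargin b : s b * ((r⁻¹ • (w₁ + w₂)) * v b).re =
      (s b * (w₁ * v b).re + s b * (w₂ * v b).re) / r := by
    rw [re_smul_add_mul]
    ring
  have hw₀F : r⁻¹ • (w₁ + w₂) ∈ {w : ℂ | ‖w‖ = 1 ∧ ∀ b, s b * (w * v b).re ≥ 0} :=
    ⟨norm_smul_inv_norm hsum, fun b => hmargin b ▸ div_nonneg (add_nonneg (hw₁F.2 b) (hw₂F.2 b)) hr.le⟩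
  have hP₀ : P (r⁻¹ • (w₁ + w₂)) < (P w₁ + P w₂) / 2 := by
    have hN : (0 : ℝ) < 1 / N := one_div_pos.2 (Nat.cast_pos.2 (Fin.pos b₀))
    rw [hP, hP, hP, ← mul_add, mul_div_assoc]
    refine mul_lt_mul_of_pos_left ?_ hN
    simp only [hmargin, mul_div_assoc', mul_add]
    exact sum_gaussQ_div_lt_average (fun b => mul_nonneg ht.le (hw₁F.2 b))
      (fun b => mul_nonneg ht.le (hw₂F.2 b)) hr hr2 (mul_pos ht hb₀)
  linarith [hglob₁ _ hw₀F, hglob₁ w₂ hw₂F, hglob₂ w₁ hw₁F]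

theorem global_minimizer_unique_on_strict_set
    (N : ℕ) (v : Fin N → ℂ) (s : Fin N → ℝ) (hs : ∀ b, s b = 1 ∨ s b = -1)
    (t : ℝ) (ht : 0 < t) (F F₁ : Set ℂ)
    (hF : F = {w : ℂ | ‖w‖ = 1 ∧ ∀ b : Fin N, s b * (w * v b).re ≥ 0})
    (hF₁ : F₁ = {w ∈ F | ∃ b : Fin N, s b * (w * v b).re > 0})
    (P : ℂ → ℝ)
    (hP : ∀ w : ℂ, P w = (1 / (N : ℝ)) * ∑ b : Fin N, gaussQ (t * (s b * (w * v b).re)))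
    (w₁ w₂ : ℂ) (hw₁ : w₁ ∈ F₁) (hw₂ : w₂ ∈ F₁)
    (hglob₁ : ∀ w ∈ F, P w₁ ≤ P w) (hglob₂ : ∀ w ∈ F, P w₂ ≤ P w) :
    w₁ = w₂ :=
  global_minimizer_unique_on_strict_set_general N v s t ht F F₁ hF hF₁ P hP w₁ w₂ hw₁ hw₂ hglob₁
    hglob₂
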